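/- arXiv:2503.08595 — 4 statements merged into one kernel-verified Lean document; each statement's English description precedes it below -/
import Mathlib

section
/- Let ν ≥ 3 be odd. For the cycle graph C_ν with vertices ℤ/νℤ, let P_μ denote the orthogonal projection onto the eigenspace of the adjacency matrix for eigenvalue μ, and define d(p,q) = ∑_μ |P_μ(p,q)|², the sum over distinct eigenvalues μ. Then d(p,p) = (2ν−1)/ν² and d(p,q) = (ν−1)/ν² for all q ≠ p. -/
/-!
If `A * P = a • P` and `A * Q = b • Q` with `A`, `P` symmetric and `a ≠ b`, then `P * Q = 0`.
Hence, when `∑ P i = 1` and `∑ Q r = 1`, each `P i` is zero or equals the `Q r` with the same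
eigenvalue: the symmetric spectral decomposition is unique, and `d` may be computed from any one of
them. For the odd cycle we use the explicit projections `cycleProj ν r`, `0 ≤ r ≤ ν / 2`, whose
eigenvalues `2 cos (2π r / ν)` are distinct. Both `∑ r, Q r = 1` and the value of `∑ r, (Q r p q)²`
(via `cos² x = (1 + cos 2x) / 2`) reduce to the character sum `∑ s, cos (2π s j / ν) = ν [j = 0]`,
folded in half by `s ↦ -s`; since `ν` is odd, `2 j = 0` only for `j = 0`.
-/

open Finset

theorem Fintype.sum_ite_eq_of_injective {κ R β : Type*} [Fintype κ] [DecidableEq R]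
    [AddCommMonoid β] {f : κ → R} (hf : Function.Injective f) (x : R) {c : β}
    (hc : (∀ r, f r ≠ x) → c = 0) : ∑ r, (if f r = x then c else 0) = c := by
  classical
  by_cases hx : ∃ r, f r = x
  · obtain ⟨r, rfl⟩ := hx
    simp_rw [hf.eq_iff]
    simp
  · simp [not_exists.mp hx, hc (not_exists.mp hx)]

namespace Matrix

variable {n ι κ R : Type*} [Fintype n] [CommRing R] [NoZeroDivisors R]

theorem mul_eq_zero_of_eigenvalue_ne {A P Q : Matrix n n R} {a b : R} (hA : A.IsSymm)
    (hP : P.IsSymm) (hAP : A * P = a • P) (hAQ : A * Q = b • Q) (hab : a ≠ b) : P * Q = 0 := by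
  have hPA : P * A = a • P := by
    simpa [transpose_mul, hA.eq, hP.eq] using congrArg transpose hAP
  have h : (a - b) • (P * Q) = 0 := by
    rw [sub_smul, ← Matrix.smul_mul, ← hPA, ← Matrix.mul_smul, ← hAQ, mul_assoc, sub_self]
  exact (smul_eq_zero.mp h).resolve_left (sub_ne_zero.mpr hab)

variable [DecidableEq n] [Fintype ι] [Fintype κ]

structure IsSymmSpectralDecomp (A : Matrix n n R) (μ : ι → R) (P : ι → Matrix n n R) :
    Prop where
  injective : Function.Injective μ
  isSymm : ∀ i, (P i).IsSymm
  sum_eq_one : ∑ i, P i = 1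
  mul_eq_smul : ∀ i, A * P i = μ i • P i

namespace IsSymmSpectralDecomp

variable {A : Matrix n n R} {μ : ι → R} {P : ι → Matrix n n R}

theorem mul_eq_self (hD : IsSymmSpectralDecomp A μ P) (hA : A.IsSymm) {Q : Matrix n n R}
    {b : R} (hQ : A * Q = b • Q) {i : ι} (hi : μ i = b) : P i * Q = Q := by
  calc P i * Q = ∑ j, P j * Q := by
        rw [Fintype.sum_eq_single i fun j hj => mul_eq_zero_of_eigenvalue_ne hA (hD.isSymm j)
          (hD.mul_eq_smul j) hQ (hi ▸ hD.injective.ne hj)]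
    _ = Q := by rw [← sum_mul, hD.sum_eq_one, one_mul]

theorem eq_zero_of_forall_ne (hD : IsSymmSpectralDecomp A μ P) (hA : A.IsSymm)
    {Q : Matrix n n R} {b : R} (hQ : A * Q = b • Q) (hb : ∀ i, μ i ≠ b) : Q = 0 := by
  calc Q = ∑ i, P i * Q := by rw [← sum_mul, hD.sum_eq_one, one_mul]
    _ = 0 := sum_eq_zero fun i _ =>
        mul_eq_zero_of_eigenvalue_ne hA (hD.isSymm i) (hD.mul_eq_smul i) hQ (hb i)

variable {μ' : κ → R} {Q : κ → Matrix n n R}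

theorem eq_of_eigenvalue_eq (hP : IsSymmSpectralDecomp A μ P)
    (hQ : IsSymmSpectralDecomp A μ' Q) (hA : A.IsSymm) {i : ι} {r : κ} (h : μ i = μ' r) :
    P i = Q r := by
  calc P i = Q r * P i := (hQ.mul_eq_self hA (hP.mul_eq_smul i) h.symm).symm
    _ = (P i * Q r)ᵀ := by rw [transpose_mul, (hP.isSymm i).eq, (hQ.isSymm r).eq]
    _ = Q r := by rw [hP.mul_eq_self hA (hQ.mul_eq_smul r) h, (hQ.isSymm r).eq]

theorem sum_comp_eq_sum_comp (hP : IsSymmSpectralDecomp A μ P)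
    (hQ : IsSymmSpectralDecomp A μ' Q) (hA : A.IsSymm) {β : Type*} [AddCommMonoid β]
    (f : Matrix n n R → β) (hf : f 0 = 0) : ∑ i, f (P i) = ∑ r, f (Q r) := by
  classical
  exact calc ∑ i, f (P i) = ∑ i, ∑ r, if μ' r = μ i then f (P i) else 0 :=
        sum_congr rfl fun i _ => (Fintype.sum_ite_eq_of_injective hQ.injective _ fun h => by
          rw [hQ.eq_zero_of_forall_ne hA (hP.mul_eq_smul i) h, hf]).symm
    _ = ∑ r, ∑ i, if μ i = μ' r then f (Q r) else 0 := by
        rw [sum_comm]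
        refine sum_congr rfl fun r _ => sum_congr rfl fun i _ => ?_
        by_cases h : μ i = μ' r
        · simp [h, hP.eq_of_eigenvalue_eq hQ hA h]
        · simp [h, Ne.symm h]
    _ = ∑ r, f (Q r) :=
        sum_congr rfl fun r _ => Fintype.sum_ite_eq_of_injective hP.injective _ fun h => by
          rw [hP.eq_zero_of_forall_ne hA (hQ.mul_eq_smul r) h, hf]

end IsSymmSpectralDecomp

end Matrix

open scoped Real

namespace ZMod

theorem two_mul_eq_zero_iff {N : ℕ} (hN : Odd N) {j : ZMod N} : 2 * j = 0 ↔ j = 0 :=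
  ((isUnit_iff_coprime 2 N).mpr (Nat.coprime_two_left.mpr hN)).mul_right_eq_zero

variable {N : ℕ} [NeZero N]

noncomputable def cos (j : ZMod N) : ℝ := (toCircle j : ℂ).re

theorem cos_natCast (r : ℕ) : cos (r : ZMod N) = Real.cos (2 * π * r / N) := by
  rw [cos, toCircle_natCast, ← Complex.exp_ofReal_mul_I_re]
  push_cast
  ring_nf

theorem cos_zero : cos (0 : ZMod N) = 1 := by
  simp [cos]

theorem cos_neg (j : ZMod N) : cos (-j) = cos j := by
  rw [cos, cos, AddChar.map_neg_eq_inv, Circle.coe_inv_eq_conj, Complex.conj_re]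

theorem cos_add_add_cos_sub (a b : ZMod N) : cos (a + b) + cos (a - b) = 2 * cos a * cos b := by
  have hconj : (toCircle (a - b) : ℂ) = toCircle a * (starRingEnd ℂ) (toCircle b) := by
    rw [sub_eq_add_neg, AddChar.map_add_eq_mul, AddChar.map_neg_eq_inv, Circle.coe_mul,
      Circle.coe_inv_eq_conj]
  simp only [cos, AddChar.map_add_eq_mul, Circle.coe_mul, hconj, Complex.mul_re,
    Complex.conj_re, Complex.conj_im]
  ring

theorem cos_sq (j : ZMod N) : cos j ^ 2 = (1 + cos (2 * j)) / 2 := by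
  have := cos_add_add_cos_sub j j
  rw [← two_mul, sub_self, cos_zero] at this
  linarith

theorem sum_cos_mul (j : ZMod N) : ∑ s, cos (s * j) = if j = 0 then (N : ℝ) else 0 := by
  have h := AddChar.sum_mulShift j (isPrimitive_stdAddChar N)
  simp only [stdAddChar_apply] at h
  simp only [cos, ← Complex.re_sum, h, card]
  split_ifs <;> simp

theorem sum_eq_sum_range {M : Type*} [AddCommMonoid M] (g : ZMod N → M) :
    ∑ j, g j = ∑ r ∈ range N, g r :=
  (sum_nbij' (f := fun r : ℕ => g r) (fun r => (r : ZMod N)) val (fun _ _ => mem_univ _)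
    (fun j _ => mem_range.mpr (val_lt j)) (fun _ hr => val_cast_of_lt (mem_range.mp hr))
    (fun j _ => natCast_zmod_val j) fun _ _ => rfl).symm

theorem sum_add_apply_zero_eq_two_nsmul {M : Type*} [AddCommMonoid M] (hN : Odd N)
    (g : ZMod N → M) (hg : ∀ j, g (-j) = g j) :
    ∑ j, g j + g 0 = 2 • ∑ r ∈ range (N / 2 + 1), g r := by
  obtain ⟨h, rfl⟩ := hN
  have hhalf : (2 * h + 1) / 2 = h := by omega
  have hreflect : ∑ r ∈ Ico (h + 1) (2 * h + 1), g r = ∑ r ∈ Ico 1 (h + 1), g r := by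
    have := sum_Ico_reflect (fun r => g r) 1 (n := 2 * h + 1) (m := h + 1) (by omega)
    rw [show 2 * h + 1 + 1 - (h + 1) = h + 1 by omega,
      show 2 * h + 1 + 1 - 1 = 2 * h + 1 by omega] at this
    rw [← this]
    refine sum_congr rfl fun r hr => ?_
    rw [Nat.cast_sub (by simp at hr; omega), natCast_self, zero_sub, hg]
  have hbot : ∑ r ∈ range (h + 1), g r = g 0 + ∑ r ∈ Ico 1 (h + 1), g r := by
    rw [range_eq_Ico, sum_eq_sum_Ico_succ_bot (Nat.succ_pos h), Nat.cast_zero]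
  rw [hhalf, sum_eq_sum_range, ← sum_range_add_sum_Ico _ (by omega : h + 1 ≤ 2 * h + 1),
    hreflect, hbot, two_nsmul]
  abel

theorem two_mul_sum_range_cos_mul (hN : Odd N) (j : ZMod N) :
    2 * ∑ r ∈ range (N / 2 + 1), cos ((r : ZMod N) * j) = 1 + if j = 0 then (N : ℝ) else 0 := by
  have h := sum_add_apply_zero_eq_two_nsmul hN (fun s => cos (s * j))
    fun s => by rw [neg_mul, cos_neg]
  rw [sum_cos_mul, zero_mul, cos_zero, nsmul_eq_mul, Nat.cast_ofNat] at h
  linarith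

end ZMod

theorem Matrix.mul_apply_eq_add_of_cycle {N : ℕ} [NeZero N] {R : Type*} [Semiring R]
    {A : Matrix (ZMod N) (ZMod N) R}
    (hA : ∀ x y : ZMod N, A x y = if x - y = 1 ∨ y - x = 1 then 1 else 0)
    (h2 : (2 : ZMod N) ≠ 0) (M : Matrix (ZMod N) (ZMod N) R) (p q : ZMod N) :
    (A * M) p q = M (p - 1) q + M (p + 1) q := by
  have hne : p - 1 ≠ p + 1 := fun h => h2 (by linear_combination -h)
  have hrow : ∀ x, A p x = (if x = p - 1 then 1 else 0) + (if x = p + 1 then 1 else 0) := by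
    intro x
    have e1 : p - x = 1 ↔ x = p - 1 :=
      ⟨fun h => by linear_combination -h, fun h => by rw [h]; ring⟩
    have e2 : x - p = 1 ↔ x = p + 1 :=
      ⟨fun h => by linear_combination h, fun h => by rw [h]; ring⟩
    rw [hA]
    simp_rw [e1, e2]
    by_cases h1 : x = p - 1
    · simp [h1, hne]
    · by_cases h2 : x = p + 1 <;> simp [h1, h2, hne.symm]
  simp only [Matrix.mul_apply, hrow, add_mul, ite_mul, one_mul, zero_mul, sum_add_distrib,
    sum_ite_eq', mem_univ, if_true]

theorem Matrix.isSymm_of_cycle {N : ℕ} {R : Type*} [Zero R] [One R]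
    {A : Matrix (ZMod N) (ZMod N) R}
    (hA : ∀ x y : ZMod N, A x y = if x - y = 1 ∨ y - x = 1 then 1 else 0) : A.IsSymm := by
  ext p q
  rw [Matrix.transpose_apply, hA, hA]
  exact if_congr or_comm rfl rfl

/-- For `0 < r < N / 2` this is `E r + E (-r)`, where `E s p q = ω ^ (s * (p - q)) / N` with
`ω = exp (2πi / N)` is the projection onto the `s`-th Fourier mode; for `r = 0` it is `E 0`. -/
noncomputable def cycleProj (N : ℕ) [NeZero N] (r : ℕ) : Matrix (ZMod N) (ZMod N) ℝ :=
  Matrix.of fun p q => (if r = 0 then 1 else 2) / N * ZMod.cos ((r : ZMod N) * (p - q))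

section Cycle

variable {N : ℕ} [NeZero N]

theorem cycleProj_isSymm (r : ℕ) : (cycleProj N r).IsSymm := by
  ext p q
  simp only [cycleProj, Matrix.transpose_apply, Matrix.of_apply]
  rw [← neg_sub, mul_neg, ZMod.cos_neg]

theorem sum_cycleProj (hN : Odd N) : ∑ r ∈ range (N / 2 + 1), cycleProj N r = 1 := by
  ext p q
  have hterm : ∀ r, cycleProj N r p q =
      (2 * ZMod.cos ((r : ZMod N) * (p - q)) - if r = 0 then 1 else 0) / N := by
    intro r
    rcases eq_or_ne r 0 with rfl | hr
    · simp [cycleProj, ZMod.cos_zero]; ring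
    · simp [cycleProj, hr]; ring
  rw [Matrix.sum_apply]
  simp_rw [hterm]
  rw [← sum_div, sum_sub_distrib, ← mul_sum, ZMod.two_mul_sum_range_cos_mul hN,
    sum_ite_eq' _ 0]
  have hN0 : (N : ℝ) ≠ 0 := Nat.cast_ne_zero.mpr (NeZero.ne N)
  rcases eq_or_ne p q with rfl | hpq
  · simp [hN0]
  · simp [sub_ne_zero.mpr hpq, hpq]

theorem sum_cycleProj_apply_sq (hN : Odd N) (p q : ZMod N) :
    ∑ r ∈ range (N / 2 + 1), cycleProj N r p q ^ 2 =
      (N - 1 + if p = q then (N : ℝ) else 0) / N ^ 2 := by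
  have hterm : ∀ r, cycleProj N r p q ^ 2 =
      (2 + 2 * ZMod.cos ((r : ZMod N) * (2 * (p - q))) - if r = 0 then 3 else 0) / N ^ 2 := by
    intro r
    rcases eq_or_ne r 0 with rfl | hr
    · simp [cycleProj, ZMod.cos_zero]; ring
    · simp only [cycleProj, Matrix.of_apply, hr, if_false, mul_pow, ZMod.cos_sq,
        mul_left_comm (r : ZMod N)]
      ring
  have hhalf : (N : ℝ) = 2 * (N / 2 : ℕ) + 1 := by
    exact_mod_cast (Nat.two_mul_div_two_add_one_of_odd hN).symm
  simp_rw [hterm]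
  rw [← sum_div, sum_sub_distrib, sum_add_distrib, ← mul_sum, ZMod.two_mul_sum_range_cos_mul hN,
    sum_ite_eq' _ 0, sum_const, card_range]
  simp only [ZMod.two_mul_eq_zero_iff hN, sub_eq_zero, mem_range, Nat.zero_lt_succ, if_true,
    nsmul_eq_mul]
  rw [hhalf]
  push_cast
  ring

theorem mul_cycleProj {A : Matrix (ZMod N) (ZMod N) ℝ}
    (hA : ∀ x y : ZMod N, A x y = if x - y = 1 ∨ y - x = 1 then 1 else 0)
    (h2 : (2 : ZMod N) ≠ 0) (r : ℕ) :
    A * cycleProj N r = (2 * ZMod.cos (r : ZMod N)) • cycleProj N r := by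
  ext p q
  rw [Matrix.mul_apply_eq_add_of_cycle hA h2]
  simp only [cycleProj, Matrix.of_apply, Matrix.smul_apply, smul_eq_mul]
  have h := ZMod.cos_add_add_cos_sub ((r : ZMod N) * (p - q)) r
  rw [show (r : ZMod N) * (p - 1 - q) = r * (p - q) - r by ring,
    show (r : ZMod N) * (p + 1 - q) = r * (p - q) + r by ring]
  linear_combination (if r = 0 then (1 : ℝ) else 2) / N * h

theorem injective_two_mul_cos_natCast :
    Function.Injective fun r : Fin (N / 2 + 1) => 2 * ZMod.cos ((r : ℕ) : ZMod N) := by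
  have hN : (0 : ℝ) < N := Nat.cast_pos.mpr (Nat.pos_of_neZero N)
  have hmem : ∀ r : Fin (N / 2 + 1), 2 * π * (r : ℕ) / N ∈ Set.Icc 0 π := fun r => by
    have hr : 2 * ((r : ℕ) : ℝ) ≤ N := by exact_mod_cast (by omega : 2 * (r : ℕ) ≤ N)
    refine ⟨by positivity, ?_⟩
    rw [div_le_iff₀ hN]
    nlinarith [Real.pi_pos]
  intro r s h
  simp only [ZMod.cos_natCast, mul_eq_mul_left_iff, two_ne_zero, or_false] at h
  have := Real.injOn_cos (hmem r) (hmem s) h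
  field_simp at this
  exact Fin.ext (by exact_mod_cast this)

theorem isSymmSpectralDecomp_cycle (hN : Odd N) {A : Matrix (ZMod N) (ZMod N) ℝ}
    (hA : ∀ x y : ZMod N, A x y = if x - y = 1 ∨ y - x = 1 then 1 else 0)
    (h2 : (2 : ZMod N) ≠ 0) :
    A.IsSymmSpectralDecomp (fun r : Fin (N / 2 + 1) => 2 * ZMod.cos ((r : ℕ) : ZMod N))
      fun r => cycleProj N r where
  injective := injective_two_mul_cos_natCast
  isSymm r := cycleProj_isSymm r
  sum_eq_one := by
    rw [Fin.sum_univ_eq_sum_range (fun r => cycleProj N r)]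
    exact sum_cycleProj hN
  mul_eq_smul r := mul_cycleProj hA h2 r

end Cycle

theorem cycle_odd_limit_general (ν : ℕ) [NeZero ν] (hν : 3 ≤ ν) (hodd : Odd ν)
    (A : Matrix (ZMod ν) (ZMod ν) ℝ)
    (hA : ∀ x y : ZMod ν, A x y = if x - y = 1 ∨ y - x = 1 then 1 else 0)
    (k : ℕ) (μ : Fin k → ℝ) (P : Fin k → Matrix (ZMod ν) (ZMod ν) ℝ)
    (hμ : Function.Injective μ)
    (hsym : ∀ i, (P i).IsSymm)
    (hsum : ∑ i, P i = 1)
    (heig : ∀ i, A * P i = μ i • P i)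
    (d : ZMod ν → ZMod ν → ℝ)
    (hd : ∀ p q, d p q = ∑ i, (P i p q) ^ 2) :
    ∀ p q : ZMod ν,
      d p p = (2 * ν - 1) / ν ^ 2 ∧ (q ≠ p → d p q = (ν - 1) / ν ^ 2) := by
  have h2 : (2 : ZMod ν) ≠ 0 := fun h => by
    have := Nat.le_of_dvd two_pos ((ZMod.natCast_eq_zero_iff 2 ν).mp (by exact_mod_cast h))
    omega
  have hdist : ∀ p q, d p q = (ν - 1 + if p = q then (ν : ℝ) else 0) / ν ^ 2 := fun p q => by
    rw [hd, Matrix.IsSymmSpectralDecomp.sum_comp_eq_sum_comp ⟨hμ, hsym, hsum, heig⟩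
      (isSymmSpectralDecomp_cycle hodd hA h2) (Matrix.isSymm_of_cycle hA)
      (fun M => M p q ^ 2) (by simp),
      Fin.sum_univ_eq_sum_range (fun r => cycleProj ν r p q ^ 2), sum_cycleProj_apply_sq hodd]
  intro p q
  refine ⟨by rw [hdist, if_pos rfl]; ring, fun hqp => ?_⟩
  rw [hdist, if_neg (Ne.symm hqp), add_zero]

/-- Limiting weights for the odd cycle `C_ν`: given the spectral decomposition of the
adjacency matrix (a family of mutually orthogonal symmetric projections `P i` summing to
the identity, with distinct eigenvalues `μ i`), and `d p q = ∑ i |P i (p,q)|²`, we have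
`d p p = (2ν-1)/ν²` and `d p q = (ν-1)/ν²` for `q ≠ p`. -/
theorem cycle_odd_limit (ν : ℕ) [NeZero ν] (hν : 3 ≤ ν) (hodd : Odd ν)
    (A : Matrix (ZMod ν) (ZMod ν) ℝ)
    (hA : ∀ x y : ZMod ν, A x y = if x - y = 1 ∨ y - x = 1 then 1 else 0)
    (k : ℕ) (μ : Fin k → ℝ) (P : Fin k → Matrix (ZMod ν) (ZMod ν) ℝ)
    (hμ : Function.Injective μ)
    (hsym : ∀ i, (P i).IsSymm)
    (hproj : ∀ i, P i * P i = P i)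
    (horth : ∀ i j, i ≠ j → P i * P j = 0)
    (hsum : ∑ i, P i = 1)
    (heig : ∀ i, A * P i = μ i • P i)
    (d : ZMod ν → ZMod ν → ℝ)
    (hd : ∀ p q, d p q = ∑ i, (P i p q) ^ 2) :
    ∀ p q : ZMod ν,
      d p p = (2 * ν - 1) / ν ^ 2 ∧ (q ≠ p → d p q = (ν - 1) / ν ^ 2) :=
  cycle_odd_limit_general ν hν hodd A hA k μ P hμ hsym hsum heig d hd
end

section
/- Let ν ≥ 4 be even. For the cycle graph C_ν with vertices ℤ/νℤ and d(p,q) = ∑_μ |P_μ(p,q)|² (sum over distinct adjacency eigenvalues μ, P_μ the spectral projections), we have d(p,p) = d(p, p+ν/2) = (2/ν)(1 − 1/ν), and d(p,q) = (1/ν)(1 − 2/ν) for all other q. -/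
/-!
Over `ℂ` the adjacency matrix `A` of `C_ν` is diagonalised by the rank-one Fourier projections
`E_j (p, q) = ω ^ (j (q - p)) / ν`, `ω = exp (2πi/ν)`, which sum to `1` and satisfy
`E_j A = (ω ^ j + ω ^ (-j)) E_j`. As the `P i` also sum to `1` and have distinct eigenvalues,
`E_j P i` is `E_j` or `0` according as the eigenvalues agree, so each `P i` is the sum of the `E_j`
over one eigenvalue class `{j, -j}`, and every class occurs. Hence
`d p q = ∑ j, E_j (E_j + [j ≠ -j] E_(-j))` at `(p, q)`; since `E_j E_(-j) = 1/ν²`, orthogonality of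
characters turns this into `(ν [2 (q - p) = 0] + ν - 2) / ν²`, and `2 (q - p) = 0` exactly for
`q ∈ {p, p + ν/2}`.
-/

open Finset

namespace Matrix

variable {n K : Type*} [Fintype n] [Field K]

theorem mul_eq_zero_of_mul_eq_smul_of_ne {A E P : Matrix n n K} {a b : K}
    (hE : E * A = a • E) (hP : A * P = b • P) (hab : a ≠ b) : E * P = 0 := by
  by_contra h
  refine hab (smul_left_injective K h ?_)
  show a • (E * P) = b • (E * P)
  rw [← smul_mul, ← hE, Matrix.mul_assoc, hP, Matrix.mul_smul]

variable [DecidableEq n] {ι J : Type*} [Fintype ι] [Fintype J] [DecidableEq K] {A : Matrix n n K}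
  {P : ι → Matrix n n K} {μ : ι → K}

theorem exists_eq_of_mul_eq_smul_of_sum_eq_one (hP : ∑ i, P i = 1)
    (hAP : ∀ i, A * P i = μ i • P i) {E : Matrix n n K} {a : K} (hEA : E * A = a • E)
    (hE : E ≠ 0) : ∃ i, μ i = a := by
  by_contra! h
  refine hE ?_
  calc E = ∑ i, E * P i := by rw [← mul_sum, hP, Matrix.mul_one]
    _ = 0 := sum_eq_zero fun i _ => mul_eq_zero_of_mul_eq_smul_of_ne hEA (hAP i) (h i).symm

theorem eq_sum_filter_of_mul_eq_smul {E : J → Matrix n n K} {l : J → K}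
    (hE : ∑ j, E j = 1) (hEA : ∀ j, E j * A = l j • E j)
    (hP : ∑ i, P i = 1) (hAP : ∀ i, A * P i = μ i • P i) (hμ : Function.Injective μ) (i : ι) :
    P i = ∑ j with l j = μ i, E j := by
  have hEP : ∀ j, E j * P i = if l j = μ i then E j else 0 := by
    intro j
    split_ifs with h
    · calc E j * P i = ∑ i', E j * P i' := by
            rw [Fintype.sum_eq_single i fun i' hi' => ?_]
            exact mul_eq_zero_of_mul_eq_smul_of_ne (hEA j) (hAP i')
              fun h' => hi' (hμ (h'.symm.trans h))
        _ = E j := by rw [← mul_sum, hP, Matrix.mul_one]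
    · exact mul_eq_zero_of_mul_eq_smul_of_ne (hEA j) (hAP i) h
  calc P i = ∑ j, E j * P i := by rw [← sum_mul, hE, Matrix.one_mul]
    _ = ∑ j with l j = μ i, E j := by rw [sum_filter]; exact sum_congr rfl fun j _ => hEP j

end Matrix

theorem Finset.sum_sq_sum_filter_eq {ι J β R : Type*} [Fintype ι] [Fintype J] [DecidableEq β]
    [CommSemiring R] {μ : ι → β} {l : J → β} (hμ : Function.Injective μ)
    (hl : ∀ j, ∃ i, μ i = l j) (e : J → R) :
    ∑ i, (∑ j with l j = μ i, e j) ^ 2 = ∑ j, e j * ∑ j' with l j' = l j, e j' := by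
  classical
  choose g hg using hl
  have hfiber : ∀ i j, l j = μ i ↔ g j = i := fun i j => by rw [← hg, hμ.eq_iff]
  calc ∑ i, (∑ j with l j = μ i, e j) ^ 2
      = ∑ i, ∑ j with g j = i, e j * ∑ j' with l j' = l j, e j' := by
        refine sum_congr rfl fun i _ => ?_
        rw [sq, sum_mul]
        refine sum_congr (by simp only [hfiber]) fun j hj => ?_
        rw [(hfiber i j).mpr (mem_filter.mp hj).2]
    _ = ∑ j, e j * ∑ j' with l j' = l j, e j' := sum_fiberwise _ g _

theorem Matrix.sum_sq_apply_eq_of_mul_eq_smul {n K ι J : Type*} [Fintype n] [DecidableEq n]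
    [Field K] [DecidableEq K] [Fintype ι] [Fintype J] {A : Matrix n n K}
    {E : J → Matrix n n K} {l : J → K} {P : ι → Matrix n n K} {μ : ι → K}
    (hE : ∑ j, E j = 1) (hE0 : ∀ j, E j ≠ 0) (hEA : ∀ j, E j * A = l j • E j)
    (hP : ∑ i, P i = 1) (hAP : ∀ i, A * P i = μ i • P i) (hμ : Function.Injective μ) (p q : n) :
    ∑ i, P i p q ^ 2 = ∑ j, E j p q * ∑ j' with l j' = l j, E j' p q := by
  rw [← Finset.sum_sq_sum_filter_eq hμ fun j =>
    Matrix.exists_eq_of_mul_eq_smul_of_sum_eq_one hP hAP (hEA j) (hE0 j)]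
  simp only [Matrix.eq_sum_filter_of_mul_eq_smul hE hEA hP hAP hμ, Matrix.sum_apply]

open ZMod (stdAddChar)

theorem ZMod.natCast_ne_zero_of_lt {n a : ℕ} (ha : 0 < a) (han : a < n) : (a : ZMod n) ≠ 0 :=
  fun h => (Nat.le_of_dvd ha ((ZMod.natCast_eq_zero_iff a n).mp h)).not_gt han

theorem ZMod.add_self_eq_zero_iff_of_even {n : ℕ} [NeZero n] (hn : Even n) {x : ZMod n} :
    x + x = 0 ↔ x = 0 ∨ x = ((n / 2 : ℕ) : ZMod n) := by
  obtain ⟨m, rfl⟩ := hn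
  have hm : 0 < m := by have := NeZero.pos (m + m); omega
  rw [show (m + m) / 2 = m by omega, ← ZMod.natCast_zmod_val x, ← Nat.cast_add,
    ZMod.natCast_eq_zero_iff, ZMod.natCast_eq_zero_iff, ZMod.natCast_eq_natCast_iff',
    Nat.mod_eq_of_lt (ZMod.val_lt x), Nat.mod_eq_of_lt (by omega : m < m + m)]
  have hlt := ZMod.val_lt x
  constructor
  · rintro ⟨c, hc⟩
    have : c < 2 := by nlinarith
    interval_cases c
    · exact .inl ⟨0, by omega⟩
    · exact .inr (by omega)
  · rintro (⟨c, hc⟩ | h)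
    · exact dvd_add ⟨c, hc⟩ ⟨c, hc⟩
    · exact ⟨1, by omega⟩

theorem ZMod.card_filter_add_self_eq_zero_of_even {n : ℕ} [NeZero n] (hn : Even n) :
    #{x : ZMod n | x + x = 0} = 2 := by
  have hpos := NeZero.pos n
  have hhalf : ((n / 2 : ℕ) : ZMod n) ≠ 0 :=
    ZMod.natCast_ne_zero_of_lt (by grind) (by omega)
  rw [← card_pair hhalf.symm]
  congr 1
  ext x
  simp [ZMod.add_self_eq_zero_iff_of_even hn]

section Cycle

variable {ν : ℕ} [NeZero ν]

theorem ZMod.sum_stdAddChar_mul (t : ZMod ν) :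
    ∑ j, stdAddChar (j * t) = if t = 0 then (ν : ℂ) else 0 := by
  rw [AddChar.sum_mulShift t (ZMod.isPrimitive_stdAddChar ν), ZMod.card, Nat.cast_ite,
    Nat.cast_zero]

theorem ZMod.stdAddChar_mul_stdAddChar_neg (j : ZMod ν) : stdAddChar j * stdAddChar (-j) = 1 := by
  rw [← AddChar.map_add_eq_mul, add_neg_cancel, AddChar.map_zero_eq_one]

variable (ν) in
noncomputable def fourierProj (j : ZMod ν) : Matrix (ZMod ν) (ZMod ν) ℂ :=
  Matrix.of fun p q => stdAddChar (j * (q - p)) / ν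

noncomputable def cycleEigenvalue (j : ZMod ν) : ℂ := stdAddChar j + stdAddChar (-j)

theorem fourierProj_apply (j p q : ZMod ν) :
    fourierProj ν j p q = stdAddChar (j * (q - p)) / ν := rfl

theorem sum_fourierProj : ∑ j, fourierProj ν j = 1 := by
  ext p q
  simp only [Matrix.sum_apply, fourierProj_apply, ← sum_div, ZMod.sum_stdAddChar_mul, sub_eq_zero,
    Matrix.one_apply, eq_comm (a := q)]
  split_ifs
  · exact div_self (NeZero.ne _)
  · exact zero_div _

theorem fourierProj_ne_zero (j : ZMod ν) : fourierProj ν j ≠ 0 := fun h => by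
  simpa [fourierProj_apply, NeZero.ne] using congrFun₂ h 0 0

theorem fourierProj_mul_adjacency (h2 : (2 : ZMod ν) ≠ 0) {A : Matrix (ZMod ν) (ZMod ν) ℂ}
    (hA : ∀ x y, A x y = if x - y = 1 ∨ y - x = 1 then 1 else 0) (j : ZMod ν) :
    fourierProj ν j * A = cycleEigenvalue j • fourierProj ν j := by
  ext p q
  have hA' : ∀ r, A r q = if r ∈ ({q + 1, q - 1} : Finset (ZMod ν)) then 1 else 0 := by
    intro r
    have e1 : r - q = 1 ↔ r = q + 1 := by constructor <;> intro h <;> linear_combination h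
    have e2 : q - r = 1 ↔ r = q - 1 := by constructor <;> intro h <;> linear_combination -h
    simp only [hA, e1, e2, mem_insert, mem_singleton]
  have hne : q + 1 ≠ q - 1 := fun h => h2 (by linear_combination h)
  simp only [Matrix.mul_apply, hA', mul_ite, mul_one, mul_zero, sum_ite_mem, univ_inter,
    sum_pair hne, fourierProj_apply, Matrix.smul_apply, smul_eq_mul, cycleEigenvalue]
  rw [show j * (q + 1 - p) = j * (q - p) + j by ring,
    show j * (q - 1 - p) = j * (q - p) + -j by ring, AddChar.map_add_eq_mul, AddChar.map_add_eq_mul]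
  ring

theorem cycleEigenvalue_eq_iff {j j' : ZMod ν} :
    cycleEigenvalue j' = cycleEigenvalue j ↔ j' = j ∨ j' = -j := by
  constructor
  · intro h
    have key : (stdAddChar j' - stdAddChar j) * (stdAddChar j' * stdAddChar j - 1) = 0 := by
      unfold cycleEigenvalue at h
      linear_combination (stdAddChar j' * stdAddChar j) * h
        - stdAddChar j * ZMod.stdAddChar_mul_stdAddChar_neg j'
        + stdAddChar j' * ZMod.stdAddChar_mul_stdAddChar_neg j
    rcases mul_eq_zero.mp key with h | h
    · exact .inl (ZMod.injective_stdAddChar (sub_eq_zero.mp h))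
    · refine .inr (eq_neg_of_add_eq_zero_left (ZMod.injective_stdAddChar ?_))
      rw [AddChar.map_add_eq_mul, AddChar.map_zero_eq_one, sub_eq_zero.mp h]
  · rintro (rfl | rfl)
    · rfl
    · rw [cycleEigenvalue, cycleEigenvalue, neg_neg, add_comm]

theorem filter_cycleEigenvalue_eq (j : ZMod ν) :
    ({j' | cycleEigenvalue j' = cycleEigenvalue j} : Finset (ZMod ν)) = {j, -j} := by
  ext j'
  simp [cycleEigenvalue_eq_iff]

theorem fourierProj_mul_apply (j j' p q : ZMod ν) :
    fourierProj ν j p q * fourierProj ν j' p q = stdAddChar ((j + j') * (q - p)) / ν ^ 2 := by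
  rw [fourierProj_apply, fourierProj_apply, add_mul, AddChar.map_add_eq_mul, sq,
    div_mul_div_comm]

theorem fourierProj_mul_sum_eigenspace (j p q : ZMod ν) :
    fourierProj ν j p q * ∑ j' with cycleEigenvalue j' = cycleEigenvalue j,
      fourierProj ν j' p q =
    (stdAddChar (j * ((q - p) + (q - p))) + if j + j = 0 then 0 else 1) / ν ^ 2 := by
  rw [filter_cycleEigenvalue_eq, show j * ((q - p) + (q - p)) = (j + j) * (q - p) by ring]
  by_cases h : j + j = 0
  · rw [if_pos h, add_zero, neg_eq_of_add_eq_zero_left h, pair_eq_singleton, sum_singleton,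
      fourierProj_mul_apply]
  · rw [if_neg h, sum_pair (mt eq_neg_iff_add_eq_zero.mp h), mul_add, fourierProj_mul_apply,
      fourierProj_mul_apply, add_neg_cancel, zero_mul, AddChar.map_zero_eq_one, add_div]

theorem sum_fourierProj_mul_sum_eigenspace (heven : Even ν) (p q : ZMod ν) :
    ∑ j, fourierProj ν j p q * ∑ j' with cycleEigenvalue j' = cycleEigenvalue j,
      fourierProj ν j' p q =
    ((if (q - p) + (q - p) = 0 then (ν : ℂ) else 0) + (ν - 2)) / ν ^ 2 := by
  have hcount : ∑ j : ZMod ν, (if j + j = 0 then (0 : ℂ) else 1) = ν - 2 := by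
    calc ∑ j : ZMod ν, (if j + j = 0 then (0 : ℂ) else 1)
        = ∑ j : ZMod ν, (1 - if j + j = 0 then 1 else 0) :=
          sum_congr rfl fun j _ => by split_ifs <;> ring
      _ = ν - 2 := by
          rw [sum_sub_distrib, sum_boole, ZMod.card_filter_add_self_eq_zero_of_even heven,
            sum_const, card_univ, ZMod.card, nsmul_one]
          norm_num
  simp only [fourierProj_mul_sum_eigenspace, ← sum_div, sum_add_distrib, ZMod.sum_stdAddChar_mul,
    hcount]

theorem sum_sq_apply_of_mul_cycleAdjacency_eq_smul (h2 : (2 : ZMod ν) ≠ 0) (heven : Even ν)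
    {A : Matrix (ZMod ν) (ZMod ν) ℂ} (hA : ∀ x y, A x y = if x - y = 1 ∨ y - x = 1 then 1 else 0)
    {ι : Type*} [Fintype ι] {P : ι → Matrix (ZMod ν) (ZMod ν) ℂ} {μ : ι → ℂ}
    (hμ : Function.Injective μ) (hP : ∑ i, P i = 1) (hAP : ∀ i, A * P i = μ i • P i)
    (p q : ZMod ν) :
    ∑ i, P i p q ^ 2 = ((if (q - p) + (q - p) = 0 then (ν : ℂ) else 0) + (ν - 2)) / ν ^ 2 := by
  classical
  rw [Matrix.sum_sq_apply_eq_of_mul_eq_smul sum_fourierProj fourierProj_ne_zero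
    (fourierProj_mul_adjacency h2 hA) hP hAP hμ, sum_fourierProj_mul_sum_eigenspace heven]

end Cycle

theorem cycle_even_limit_general (ν : ℕ) [NeZero ν] (hν : 4 ≤ ν) (heven : Even ν)
    (A : Matrix (ZMod ν) (ZMod ν) ℝ)
    (hA : ∀ x y : ZMod ν, A x y = if x - y = 1 ∨ y - x = 1 then 1 else 0)
    (k : ℕ) (μ : Fin k → ℝ) (P : Fin k → Matrix (ZMod ν) (ZMod ν) ℝ)
    (hμ : Function.Injective μ)
    (hsum : ∑ i, P i = 1)
    (heig : ∀ i, A * P i = μ i • P i)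
    (d : ZMod ν → ZMod ν → ℝ)
    (hd : ∀ p q, d p q = ∑ i, (P i p q) ^ 2) :
    ∀ p q : ZMod ν,
      ((q = p ∨ q = p + (ν / 2 : ℕ)) → d p q = (2 / ν) * (1 - 1 / ν)) ∧
      (¬(q = p ∨ q = p + (ν / 2 : ℕ)) → d p q = (1 / ν) * (1 - 2 / ν)) := by
  intro p q
  let φ := Complex.ofRealHom.mapMatrix (m := ZMod ν)
  have h2 : (2 : ZMod ν) ≠ 0 := by
    exact_mod_cast ZMod.natCast_ne_zero_of_lt (n := ν) two_pos (by omega)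
  have hAC : ∀ x y, φ A x y = if x - y = 1 ∨ y - x = 1 then 1 else 0 := fun x y => by
    simp only [φ, RingHom.mapMatrix_apply, Matrix.map_apply, hA]
    split_ifs <;> simp
  have hAP : ∀ i, φ A * φ (P i) = (μ i : ℂ) • φ (P i) := fun i => by
    rw [← map_mul, heig, RingHom.mapMatrix_apply, Matrix.map_smul' _ _ _ (map_mul _)]
    rfl
  have hdC : (d p q : ℂ) = ((if (q - p) + (q - p) = 0 then (ν : ℂ) else 0) + (ν - 2)) / ν ^ 2 := by
    rw [hd, ← sum_sq_apply_of_mul_cycleAdjacency_eq_smul h2 heven hAC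
      (Complex.ofReal_injective.comp hμ) (by rw [← map_sum, hsum, map_one]) hAP]
    push_cast
    rfl
  have hcase : (q - p) + (q - p) = 0 ↔ q = p ∨ q = p + (ν / 2 : ℕ) := by
    rw [ZMod.add_self_eq_zero_iff_of_even heven, sub_eq_zero, sub_eq_iff_eq_add']
  have hνC : (ν : ℂ) ≠ 0 := NeZero.ne _
  refine ⟨fun h => Complex.ofReal_injective ?_, fun h => Complex.ofReal_injective ?_⟩
  · rw [hdC, if_pos (hcase.mpr h)]
    push_cast
    field_simp
    ring
  · rw [hdC, if_neg (mt hcase.mp h)]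
    push_cast
    field_simp
    ring

/-- Limiting weights for the even cycle `C_ν`: with the spectral decomposition of the
adjacency matrix and `d p q = ∑ i |P i (p,q)|²`, we have
`d p p = d p (p + ν/2) = (2/ν)(1 - 1/ν)` and `d p q = (1/ν)(1 - 2/ν)` for all other `q`. -/
theorem cycle_even_limit (ν : ℕ) [NeZero ν] (hν : 4 ≤ ν) (heven : Even ν)
    (A : Matrix (ZMod ν) (ZMod ν) ℝ)
    (hA : ∀ x y : ZMod ν, A x y = if x - y = 1 ∨ y - x = 1 then 1 else 0)
    (k : ℕ) (μ : Fin k → ℝ) (P : Fin k → Matrix (ZMod ν) (ZMod ν) ℝ)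
    (hμ : Function.Injective μ)
    (hsym : ∀ i, (P i).IsSymm)
    (hproj : ∀ i, P i * P i = P i)
    (horth : ∀ i j, i ≠ j → P i * P j = 0)
    (hsum : ∑ i, P i = 1)
    (heig : ∀ i, A * P i = μ i • P i)
    (d : ZMod ν → ZMod ν → ℝ)
    (hd : ∀ p q, d p q = ∑ i, (P i p q) ^ 2) :
    ∀ p q : ZMod ν,
      ((q = p ∨ q = p + (ν / 2 : ℕ)) → d p q = (2 / ν) * (1 - 1 / ν)) ∧
      (¬(q = p ∨ q = p + (ν / 2 : ℕ)) → d p q = (1 / ν) * (1 - 2 / ν)) :=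
  cycle_even_limit_general ν hν heven A hA k μ P hμ hsum heig d hd
end

section
/- Let ν ≥ 2 and let P_ν be the path graph on vertices {1,…,ν}. Define d(p,q) = ∑_{s=1}^{ν} |w_s(p)|²|w_s(q)|² where w_s(ℓ) = √(2/(ν+1)) sin(πsℓ/(ν+1)) are the normalized eigenvectors of the adjacency matrix. Then d(p,q) = 2/(ν+1) if p = q = (ν+1)/2; d(p,q) = 3/(2(ν+1)) if either (p = q and p+q ≠ ν+1) or (p ≠ q and p+q = ν+1); and d(p,q) = 1/(ν+1) otherwise. -/
open Real Finset

/-!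
Power reduction writes `sin² a · sin² b` as a combination of `1` and the cosines of `2a`, `2b`,
`2a - 2b`, `2a + 2b`. With `a = π s p / n`, `b = π s q / n` and `n = ν + 1`, each cosine becomes
`cos (2 π k s / n)` for `k ∈ {p, q, p - q, p + q}`, and summed over a full period `s < n` it gives
`n` or `0` according as `n ∣ k` or not. For `1 ≤ p, q ≤ ν` only `p - q` (exactly when `p = q`) and
`p + q` (exactly when `p + q = ν + 1`) can be divisible by `n`.
-/

theorem sum_range_cos_two_pi_mul_div (n : ℕ) (k : ℤ) :
    ∑ s ∈ range n, cos (2 * π * k / n * s) = if (n : ℤ) ∣ k then (n : ℝ) else 0 := by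
  rcases eq_or_ne n 0 with rfl | hn
  · simp
  have hn' : (n : ℝ) ≠ 0 := Nat.cast_ne_zero.mpr hn
  split_ifs with hdvd
  · obtain ⟨m, rfl⟩ := hdvd
    have hterm (s : ℕ) : cos (2 * π * ((n * m : ℤ) : ℝ) / n * s) = 1 := by
      rw [show 2 * π * ((n * m : ℤ) : ℝ) / n * s = ((m * s : ℤ) : ℝ) * (2 * π) by
        push_cast; field_simp]
      exact cos_int_mul_two_pi _
    simp only [hterm, sum_const, card_range, nsmul_eq_mul, mul_one]
  · have hnot_period (m : ℤ) : 2 * π * k / n ≠ m * (2 * π) := by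
      intro h
      refine hdvd ⟨m, ?_⟩
      field_simp at h
      exact_mod_cast (by linarith [h] : (k : ℝ) = n * m)
    have hsin : sin (n * (2 * π * k / n) / 2) = 0 := by
      rw [show n * (2 * π * k / n) / 2 = k * π by field_simp]
      exact sin_int_mul_pi k
    simpa [hsin] using sum_cos n hnot_period 0

theorem sin_sq_mul_sin_sq (x y : ℝ) :
    sin x ^ 2 * sin y ^ 2 =
      (1 - cos (2 * x) - cos (2 * y) + (cos (2 * x - 2 * y) + cos (2 * x + 2 * y)) / 2) / 4 := by
  rw [sin_sq_eq_half_sub, sin_sq_eq_half_sub, cos_sub, cos_add]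
  ring

theorem sum_range_sin_sq_mul_sin_sq (n : ℕ) (p q : ℤ) :
    ∑ s ∈ range n, sin (π * s * p / n) ^ 2 * sin (π * s * q / n) ^ 2 =
      (n - (if (n : ℤ) ∣ p then (n : ℝ) else 0) - (if (n : ℤ) ∣ q then (n : ℝ) else 0)
        + ((if (n : ℤ) ∣ p - q then (n : ℝ) else 0) + (if (n : ℤ) ∣ p + q then (n : ℝ) else 0)) / 2)
        / 4 := by
  have harg (k : ℤ) (s : ℕ) : 2 * π * k / n * s = 2 * (π * s * k / n) := by ring
  have hsub (s : ℕ) :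
      2 * (π * s * p / n) - 2 * (π * s * q / n) = 2 * (π * s * ((p - q : ℤ) : ℝ) / n) := by
    push_cast; ring
  have hadd (s : ℕ) :
      2 * (π * s * p / n) + 2 * (π * s * q / n) = 2 * (π * s * ((p + q : ℤ) : ℝ) / n) := by
    push_cast; ring
  simp only [← sum_range_cos_two_pi_mul_div, harg, sin_sq_mul_sin_sq, hsub, hadd, ← sum_div,
    sum_add_distrib, sum_sub_distrib, sum_const, card_range, nsmul_one]

theorem Int.natCast_dvd_natCast_sub_iff_eq {n p q : ℕ} (hp : p < n) (hq : q < n) :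
    (n : ℤ) ∣ (p : ℤ) - q ↔ p = q := by
  rw [← Nat.modEq_iff_dvd]
  exact ⟨fun h => (h.eq_of_lt_of_lt hq hp).symm, fun h => h ▸ rfl⟩

theorem Int.natCast_dvd_natCast_add_iff_eq {n p q : ℕ} (hpq : p + q ≠ 0) (hlt : p + q < 2 * n) :
    (n : ℤ) ∣ (p : ℤ) + q ↔ p + q = n := by
  rw [← Nat.cast_add, Int.natCast_dvd_natCast]
  exact ⟨fun h => Nat.eq_of_dvd_of_lt_two_mul hpq h hlt, fun h => h ▸ dvd_rfl⟩

theorem sum_Icc_one_eq_sum_range_succ {M : Type*} [AddCommMonoid M] (f : ℕ → M) (hf : f 0 = 0)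
    (n : ℕ) : ∑ s ∈ Icc 1 n, f s = ∑ s ∈ range (n + 1), f s := by
  rw [sum_range_succ', hf, add_zero, range_eq_Ico, sum_Ico_add' f 0 n 1]
  rfl

/-- The `s`-th normalized eigenvector of the adjacency matrix of the path on `{1, …, ν}`. -/
noncomputable def pathEigenvector (ν s ℓ : ℕ) : ℝ :=
  √(2 / (ν + 1)) * sin (π * s * ℓ / (ν + 1))

theorem sum_sq_pathEigenvector_mul_sq {ν p q : ℕ} (hp : 1 ≤ p) (hp' : p ≤ ν)
    (hq : 1 ≤ q) (hq' : q ≤ ν) :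
    ∑ s ∈ Icc 1 ν, pathEigenvector ν s p ^ 2 * pathEigenvector ν s q ^ 2 =
      (2 + (if p = q then 1 else 0) + (if p + q = ν + 1 then 1 else 0)) / (2 * (ν + 1)) := by
  have hN : (0 : ℝ) < ν + 1 := by positivity
  have hndvd {k : ℕ} (hk : 1 ≤ k) (hk' : k ≤ ν) : ¬ ((ν + 1 : ℕ) : ℤ) ∣ k :=
    Int.natCast_dvd_natCast.not.mpr (Nat.not_dvd_of_pos_of_lt hk (by omega))
  have hsum := sum_range_sin_sq_mul_sin_sq (ν + 1) p q
  simp only [if_neg (hndvd hp hp'), if_neg (hndvd hq hq'),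
    Int.natCast_dvd_natCast_sub_iff_eq (show p < ν + 1 by omega) (show q < ν + 1 by omega),
    Int.natCast_dvd_natCast_add_iff_eq (show p + q ≠ 0 by omega)
      (show p + q < 2 * (ν + 1) by omega)] at hsum
  push_cast at hsum
  simp only [pathEigenvector, mul_pow, sq_sqrt (div_nonneg zero_le_two hN.le)]
  rw [sum_Icc_one_eq_sum_range_succ _ (by simp)]
  simp only [mul_mul_mul_comm (2 / _ : ℝ), ← mul_sum, hsum]
  split_ifs <;> field_simp <;> ring

theorem path_limit_general (ν : ℕ)
    (w : ℕ → ℕ → ℝ)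
    (hw : ∀ s ℓ, w s ℓ = Real.sqrt (2 / (ν + 1)) * Real.sin (π * s * ℓ / (ν + 1)))
    (d : ℕ → ℕ → ℝ)
    (hd : ∀ p q, d p q = ∑ s ∈ Finset.Icc 1 ν, (w s p) ^ 2 * (w s q) ^ 2)
    (p q : ℕ) (hp : 1 ≤ p) (hp' : p ≤ ν) (hq : 1 ≤ q) (hq' : q ≤ ν) :
    (p = q ∧ p + q = ν + 1 → d p q = 2 / (ν + 1)) ∧
    ((p = q ∧ p + q ≠ ν + 1) ∨ (p ≠ q ∧ p + q = ν + 1) →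
      d p q = 3 / (2 * (ν + 1))) ∧
    (¬(p = q) ∧ ¬(p + q = ν + 1) → d p q = 1 / (ν + 1)) := by
  have hdpq : d p q =
      (2 + (if p = q then 1 else 0) + (if p + q = ν + 1 then 1 else 0)) / (2 * (ν + 1)) := by
    rw [hd, ← sum_sq_pathEigenvector_mul_sq hp hp' hq hq']
    simp only [hw, pathEigenvector]
  have hN : (ν + 1 : ℝ) ≠ 0 := by positivity
  refine ⟨fun ⟨hpq, hsum⟩ => ?_, ?_, fun ⟨hpq, hsum⟩ => ?_⟩
  · rw [hdpq, if_pos hpq, if_pos hsum]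
    field_simp
    norm_num
  · rintro (⟨hpq, hsum⟩ | ⟨hpq, hsum⟩)
    · rw [hdpq, if_pos hpq, if_neg hsum]
      norm_num
    · rw [hdpq, if_neg hpq, if_pos hsum]
      norm_num
  · rw [hdpq, if_neg hpq, if_neg hsum]
    field_simp
    norm_num

/-- Limiting weights for the path graph `P_ν` on vertices `{1,…,ν}`:
with `w_s(ℓ) = √(2/(ν+1)) sin (π s ℓ/(ν+1))` the normalized eigenvectors and
`d p q = ∑ s |w_s(p)|² |w_s(q)|²`, the stated case distinction holds. -/
theorem path_limit (ν : ℕ) (hν : 2 ≤ ν)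
    (w : ℕ → ℕ → ℝ)
    (hw : ∀ s ℓ, w s ℓ = Real.sqrt (2 / (ν + 1)) * Real.sin (π * s * ℓ / (ν + 1)))
    (d : ℕ → ℕ → ℝ)
    (hd : ∀ p q, d p q = ∑ s ∈ Finset.Icc 1 ν, (w s p) ^ 2 * (w s q) ^ 2)
    (p q : ℕ) (hp : 1 ≤ p) (hp' : p ≤ ν) (hq : 1 ≤ q) (hq' : q ≤ ν) :
    (p = q ∧ p + q = ν + 1 → d p q = 2 / (ν + 1)) ∧
    ((p = q ∧ p + q ≠ ν + 1) ∨ (p ≠ q ∧ p + q = ν + 1) →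
      d p q = 3 / (2 * (ν + 1))) ∧
    (¬(p = q) ∧ ¬(p + q = ν + 1) → d p q = 1 / (ν + 1)) :=
  path_limit_general ν w hw d hd p q hp hp' hq hq'
end

section
/- Let ν ≥ 2 and let K_{ν,1} be the star graph on vertices {1,…,ν+1} with ν+1 the center. Define d(p,q) = |P_0(p,q)|² + |P_{√ν}(p,q)|² + |P_{−√ν}(p,q)|², where P_μ are the spectral projections of the adjacency matrix. Then for 1 ≤ p ≤ ν: d(p,p) = (ν−1)²/ν² + 1/(2ν²), d(p,ν+1) = 1/(2ν), and d(p,q) = 3/(2ν²) for 1 ≤ q ≤ ν with q ≠ p; moreover d(ν+1,ν+1) = 1/2. -/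
/-!
Summing the eigen-relations over `P₀ + P₊ + P₋ = 1` gives `A = √ν (P₊ - P₋)` and
`A² = ν (P₊ + P₋)`, so the projections are polynomials in `A`:
`P± = (A²/ν ± A/√ν) / 2` and `P₀ = 1 - A²/ν`. Hence `d p q` depends only on the entries
of `A` and `A²`, and for the star these are explicit: `A² p q = 1` for two leaves,
`0` between a leaf and the centre, and `ν` at the centre.
-/

theorem sq_add_sq_add_sq_of_linear {K : Type*} [Field K] {t s x y z δ a b : K}
    (hs : s ≠ 0) (ht : s ^ 2 = t) (h2 : (2 : K) ≠ 0)
    (hsum : z + x + y = δ) (hdiff : s * (x - y) = a) (hadd : t * (x + y) = b) :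
    z ^ 2 + x ^ 2 + y ^ 2 = (δ - b / t) ^ 2 + ((b / t) ^ 2 + a ^ 2 / t) / 2 := by
  subst ht hsum hdiff hadd
  field_simp
  ring

section EigenProjections

variable {K R : Type*} [Field K] [Ring R] [Algebra K R]
  {A P₀ Pp Pm : R} {s : K}

theorem eq_smul_sub_of_eigenprojections (hsum : P₀ + Pp + Pm = 1) (h₀ : A * P₀ = 0)
    (hp : A * Pp = s • Pp) (hm : A * Pm = (-s) • Pm) : A = s • (Pp - Pm) := by
  calc A = A * (P₀ + Pp + Pm) := by rw [hsum, mul_one]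
    _ = s • (Pp - Pm) := by rw [mul_add, mul_add, h₀, hp, hm, smul_sub, neg_smul]; abel

theorem sq_eq_smul_add_of_eigenprojections (hsum : P₀ + Pp + Pm = 1) (h₀ : A * P₀ = 0)
    (hp : A * Pp = s • Pp) (hm : A * Pm = (-s) • Pm) : A ^ 2 = s ^ 2 • (Pp + Pm) := by
  calc A ^ 2 = A * (s • (Pp - Pm)) := by
        rw [sq]; nth_rw 2 [eq_smul_sub_of_eigenprojections hsum h₀ hp hm]
    _ = s ^ 2 • (Pp + Pm) := by
        rw [mul_smul_comm, mul_sub, hp, hm, smul_sub, smul_smul, smul_smul, mul_neg, neg_smul,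
          sub_neg_eq_add, ← sq, smul_add]

end EigenProjections

theorem Matrix.sq_add_sq_add_sq_apply_of_eigenprojections {n K : Type*} [Fintype n]
    [DecidableEq n] [Field K] {A P₀ Pp Pm : Matrix n n K} {s t : K} (hs : s ≠ 0)
    (ht : s ^ 2 = t) (h2 : (2 : K) ≠ 0) (hsum : P₀ + Pp + Pm = 1) (h₀ : A * P₀ = 0)
    (hp : A * Pp = s • Pp) (hm : A * Pm = (-s) • Pm) (i j : n) :
    P₀ i j ^ 2 + Pp i j ^ 2 + Pm i j ^ 2 =
      ((1 : Matrix n n K) i j - (A * A) i j / t) ^ 2 + (((A * A) i j / t) ^ 2 + A i j ^ 2 / t) / 2 := by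
  have hdiff := eq_smul_sub_of_eigenprojections hsum h₀ hp hm
  have hadd := sq_eq_smul_add_of_eigenprojections hsum h₀ hp hm
  refine sq_add_sq_add_sq_of_linear hs ht h2 (by simpa using congrFun₂ hsum i j) ?_ ?_
  · simpa using (congrFun₂ hdiff i j).symm
  · rw [← ht]
    simpa [sq] using (congrFun₂ hadd i j).symm

section StarGraph

variable {R : Type*} [Semiring R] {ν : ℕ} {p q : Fin (ν + 1)}

def starAdjMatrix (R : Type*) [Zero R] [One R] (ν : ℕ) : Matrix (Fin (ν + 1)) (Fin (ν + 1)) R :=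
  Matrix.of fun i j => if (i.val = ν ∧ j.val < ν) ∨ (j.val = ν ∧ i.val < ν) then 1 else 0

theorem starAdjMatrix_apply_of_lt_of_lt (hp : p.val < ν) (hq : q.val < ν) :
    starAdjMatrix R ν p q = 0 :=
  if_neg (by omega)

theorem starAdjMatrix_apply_of_lt_of_eq (hp : p.val < ν) (hq : q.val = ν) :
    starAdjMatrix R ν p q = 1 :=
  if_pos (by omega)

theorem starAdjMatrix_apply_of_eq_of_lt (hp : p.val = ν) (hq : q.val < ν) :
    starAdjMatrix R ν p q = 1 :=
  if_pos (by omega)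

theorem starAdjMatrix_apply_of_eq_of_eq (hp : p.val = ν) (hq : q.val = ν) :
    starAdjMatrix R ν p q = 0 :=
  if_neg (by omega)

theorem starAdjMatrix_mul_self_apply_of_lt (hp : p.val < ν) :
    (starAdjMatrix R ν * starAdjMatrix R ν) p q = starAdjMatrix R ν (Fin.last ν) q := by
  rw [Matrix.mul_apply, Finset.sum_eq_single (Fin.last ν)]
  · rw [starAdjMatrix_apply_of_lt_of_eq hp rfl, one_mul]
  · intro k _ hk
    rw [starAdjMatrix_apply_of_lt_of_lt hp (Fin.val_lt_last hk), zero_mul]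
  · simp

theorem starAdjMatrix_mul_self_apply_of_eq_of_eq (hp : p.val = ν) (hq : q.val = ν) :
    (starAdjMatrix R ν * starAdjMatrix R ν) p q = ν := by
  rw [Matrix.mul_apply, Fin.sum_univ_castSucc, starAdjMatrix_apply_of_eq_of_eq hp rfl, zero_mul,
    add_zero]
  have hleaf (k : Fin ν) : starAdjMatrix R ν p k.castSucc * starAdjMatrix R ν k.castSucc q = 1 := by
    rw [starAdjMatrix_apply_of_eq_of_lt hp (by simp), starAdjMatrix_apply_of_lt_of_eq (by simp) hq,
      one_mul]
  simp [hleaf]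

end StarGraph

theorem star_limit_general (ν : ℕ) (hν : 2 ≤ ν)
    (A : Matrix (Fin (ν + 1)) (Fin (ν + 1)) ℝ)
    (hA : ∀ i j : Fin (ν + 1),
      A i j = if (i.val = ν ∧ j.val < ν) ∨ (j.val = ν ∧ i.val < ν) then 1 else 0)
    (P₀ Pp Pm : Matrix (Fin (ν + 1)) (Fin (ν + 1)) ℝ)
    (hsum : P₀ + Pp + Pm = 1)
    (heig₀ : A * P₀ = 0)
    (heigp : A * Pp = Real.sqrt ν • Pp)
    (heigm : A * Pm = (-Real.sqrt ν) • Pm)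
    (d : Fin (ν + 1) → Fin (ν + 1) → ℝ)
    (hd : ∀ p q, d p q = (P₀ p q) ^ 2 + (Pp p q) ^ 2 + (Pm p q) ^ 2) :
    (∀ p q : Fin (ν + 1), p.val < ν →
      (q = p → d p q = (ν - 1) ^ 2 / ν ^ 2 + 1 / (2 * ν ^ 2)) ∧
      (q.val = ν → d p q = 1 / (2 * ν)) ∧
      (q.val < ν → q ≠ p → d p q = 3 / (2 * ν ^ 2))) ∧
    (∀ p q : Fin (ν + 1), p.val = ν → q.val = ν → d p q = 1 / 2) := by
  obtain rfl : A = starAdjMatrix ℝ ν := Matrix.ext hA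
  have hν₀ : (0 : ℝ) < ν := by exact_mod_cast (by omega : 0 < ν)
  have hd' (p q) := (hd p q).trans <| Matrix.sq_add_sq_add_sq_apply_of_eigenprojections
    (Real.sqrt_pos.2 hν₀).ne' (Real.sq_sqrt hν₀.le) two_ne_zero hsum heig₀ heigp heigm p q
  refine ⟨fun p q hp => ⟨fun hqp => ?_, fun hq => ?_, fun hq hqp => ?_⟩, fun p q hp hq => ?_⟩
  · subst hqp
    rw [hd', Matrix.one_apply_eq, starAdjMatrix_mul_self_apply_of_lt hp,
      starAdjMatrix_apply_of_eq_of_lt rfl hp, starAdjMatrix_apply_of_lt_of_lt hp hp]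
    field_simp
    ring
  · rw [hd', Matrix.one_apply_ne (by omega), starAdjMatrix_mul_self_apply_of_lt hp,
      starAdjMatrix_apply_of_eq_of_eq rfl hq, starAdjMatrix_apply_of_lt_of_eq hp hq]
    field_simp
    ring
  · rw [hd', Matrix.one_apply_ne (Ne.symm hqp), starAdjMatrix_mul_self_apply_of_lt hp,
      starAdjMatrix_apply_of_eq_of_lt rfl hq, starAdjMatrix_apply_of_lt_of_lt hp hq]
    field_simp
    ring
  · obtain rfl : p = q := Fin.ext (hp.trans hq.symm)
    rw [hd', Matrix.one_apply_eq, starAdjMatrix_mul_self_apply_of_eq_of_eq hp hq,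
      starAdjMatrix_apply_of_eq_of_eq hp hq]
    field_simp
    ring

/-- Limiting weights for the star graph `K_{ν,1}` on vertices `{1,…,ν+1}` (indexed by
`Fin (ν+1)`, the center being the last index `ν`): with `P₀, P₊, P₋` the spectral
projections of the adjacency matrix onto the eigenvalues `0, √ν, -√ν`, and
`d p q = |P₀(p,q)|² + |P₊(p,q)|² + |P₋(p,q)|²`, the stated values hold. -/
theorem star_limit (ν : ℕ) (hν : 2 ≤ ν)
    (A : Matrix (Fin (ν + 1)) (Fin (ν + 1)) ℝ)
    (hA : ∀ i j : Fin (ν + 1),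
      A i j = if (i.val = ν ∧ j.val < ν) ∨ (j.val = ν ∧ i.val < ν) then 1 else 0)
    (P₀ Pp Pm : Matrix (Fin (ν + 1)) (Fin (ν + 1)) ℝ)
    (hsym : P₀.IsSymm ∧ Pp.IsSymm ∧ Pm.IsSymm)
    (hproj : P₀ * P₀ = P₀ ∧ Pp * Pp = Pp ∧ Pm * Pm = Pm)
    (horth : P₀ * Pp = 0 ∧ P₀ * Pm = 0 ∧ Pp * Pm = 0)
    (hsum : P₀ + Pp + Pm = 1)
    (heig₀ : A * P₀ = 0)
    (heigp : A * Pp = Real.sqrt ν • Pp)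
    (heigm : A * Pm = (-Real.sqrt ν) • Pm)
    (d : Fin (ν + 1) → Fin (ν + 1) → ℝ)
    (hd : ∀ p q, d p q = (P₀ p q) ^ 2 + (Pp p q) ^ 2 + (Pm p q) ^ 2) :
    (∀ p q : Fin (ν + 1), p.val < ν →
      (q = p → d p q = (ν - 1) ^ 2 / ν ^ 2 + 1 / (2 * ν ^ 2)) ∧
      (q.val = ν → d p q = 1 / (2 * ν)) ∧
      (q.val < ν → q ≠ p → d p q = 3 / (2 * ν ^ 2))) ∧
    (∀ p q : Fin (ν + 1), p.val = ν → q.val = ν → d p q = 1 / 2) :=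
  star_limit_general ν hν A hA P₀ Pp Pm hsum heig₀ heigp heigm d hd
end
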